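/- For a, b, c > 0, μ > -1/2, β with 2μ+β+1 > 0, γ > -1, and nonnegative integers n ≥ k, the two-variable Fourier transform of g(t,x) = (1-tanh²x)^a (1+tanh t)^{b+k} (1-tanh t)^c 2^{-k} P_{n-k}^{(2k+2μ+β, γ)}(-tanh t) C_k^{(μ)}(tanh x) equals ∫∫ e^{-iξ₁x-iξ₂t} g(t,x) dx dt = 2^{b+c+2a-2} [(2k+2μ+β+1)_{n-k} (2μ)_k / ((n-k)! k!)] · [Γ(b+k-iξ₂/2)Γ(c+iξ₂/2)/Γ(k+b+c)] · B(a+iξ₁/2, a-iξ₁/2) · ₃F₂(-k, k+2μ, a+iξ₁/2; μ+1/2, 2a; 1) · ₃F₂(-n+k, n+k+2μ+β+γ+1, k+b-iξ₂/2; 2k+2μ+β+1, k+b+c; 1). -/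

import Mathlib

open MeasureTheory

/-- Pochhammer symbol (rising factorial) for a complex argument. -/
noncomputable def poch (z : ℂ) (k : ℕ) : ℂ := ∏ j ∈ Finset.range k, (z + j)

/-- Beta function for complex arguments with positive real parts. -/
noncomputable def betaC (p q : ℂ) : ℂ :=
  Complex.Gamma p * Complex.Gamma q / Complex.Gamma (p + q)

/-- Terminating Gauss hypergeometric sum ₂F₁(-n, b; c; z). -/
noncomputable def F21 (n : ℕ) (b c z : ℂ) : ℂ :=
  ∑ j ∈ Finset.range (n + 1),
    poch (-(n : ℂ)) j * poch b j / (poch c j * (j.factorial : ℂ)) * z ^ j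

/-- Terminating generalized hypergeometric sum ₃F₂(-n, b, c; d, e; 1). -/
noncomputable def F32 (n : ℕ) (b c d e : ℂ) : ℂ :=
  ∑ j ∈ Finset.range (n + 1),
    poch (-(n : ℂ)) j * poch b j * poch c j /
      (poch d j * poch e j * (j.factorial : ℂ))

/-- Gegenbauer polynomial C_k^{(μ)}(x). -/
noncomputable def geg (k : ℕ) (μ x : ℂ) : ℂ :=
  poch (2 * μ) k / (k.factorial : ℂ) * F21 k ((k : ℂ) + 2 * μ) (μ + 1 / 2) ((1 - x) / 2)

/-- Laguerre polynomial L_n^{(α)}(u). -/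
noncomputable def lag (n : ℕ) (α u : ℂ) : ℂ :=
  poch (α + 1) n / (n.factorial : ℂ) *
    ∑ j ∈ Finset.range (n + 1),
      poch (-(n : ℂ)) j / (poch (α + 1) j * (j.factorial : ℂ)) * u ^ j

/-- Jacobi polynomial P_n^{(α,γ)}(t). -/
noncomputable def jac (n : ℕ) (α γ t : ℂ) : ℂ :=
  poch (α + 1) n / (n.factorial : ℂ) * F21 n ((n : ℂ) + α + γ + 1) (α + 1) ((1 - t) / 2)

/-- Continuous Hahn polynomial p_k(x; A, B, C, D). -/
noncomputable def hahn (k : ℕ) (x A B C D : ℂ) : ℂ :=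
  Complex.I ^ k * poch (A + C) k * poch (A + D) k / (k.factorial : ℂ) *
    F32 k ((k : ℂ) + A + B + C + D - 1) (A + Complex.I * x) (A + C) (A + D)

open Real Set

noncomputable def uu (x : ℝ) : ℝ := (1 + Real.exp (2*x))⁻¹

lemma uu_pos (x : ℝ) : 0 < uu x := by
  unfold uu; positivity

lemma uu_lt_one (x : ℝ) : uu x < 1 := by
  unfold uu
  rw [inv_lt_one_iff₀]
  right; linarith [Real.exp_pos (2*x)]

lemma one_sub_uu_pos (x : ℝ) : 0 < 1 - uu x := by linarith [uu_lt_one x]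

lemma tanh_eq_uu (x : ℝ) : Real.tanh x = 1 - 2 * uu x := by
  rw [Real.tanh_eq_sinh_div_cosh, Real.sinh_eq, Real.cosh_eq]
  unfold uu
  have h1 : Real.exp x + Real.exp (-x) > 0 := by positivity
  have h2 : (0:ℝ) < 1 + Real.exp (2*x) := by positivity
  have h3 : Real.exp (2*x) = Real.exp x * Real.exp x := by
    rw [← Real.exp_add]; ring_nf
  have hx : Real.exp (-x) * Real.exp x = 1 := by
    rw [← Real.exp_add]; simp
  field_simp
  have h3' : Real.exp (x*2) = Real.exp x * Real.exp x := by rw [← Real.exp_add]; ring_nf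
  linear_combination (-2 * Real.exp (-x)) * h3' + (-2 * Real.exp x) * hx

lemma one_sub_tanh (x : ℝ) : 1 - Real.tanh x = 2 * uu x := by
  rw [tanh_eq_uu]; ring

lemma one_add_tanh (x : ℝ) : 1 + Real.tanh x = 2 * (1 - uu x) := by
  rw [tanh_eq_uu]; ring

lemma uu_div_one_sub (x : ℝ) : uu x / (1 - uu x) = Real.exp (-(2*x)) := by
  unfold uu
  have h2 : (0:ℝ) < 1 + Real.exp (2*x) := by positivity
  have : 1 - (1 + Real.exp (2*x))⁻¹ = Real.exp (2*x) / (1 + Real.exp (2*x)) := by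
    field_simp
    ring
  rw [this, Real.exp_neg]
  field_simp

lemma hasDerivAt_uu (x : ℝ) : HasDerivAt uu (-(2 * uu x * (1 - uu x))) x := by
  have h1 : HasDerivAt (fun x : ℝ => 1 + Real.exp (2*x)) (2 * Real.exp (2*x)) x := by
    have := (Real.hasDerivAt_exp (2*x)).comp x ((hasDerivAt_id x).const_mul 2)
    simpa [mul_comm] using this.const_add 1
  have h2 : (1 + Real.exp (2*x)) ≠ 0 := by positivity
  have := h1.inv h2
  refine this.congr_deriv ?_
  have : 1 - uu x = Real.exp (2*x) * uu x := by
    unfold uu; field_simp; ring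
  rw [this]
  unfold uu
  field_simp

lemma uu_injective : Function.Injective uu := by
  intro x y h
  unfold uu at h
  have h2 : (1 + Real.exp (2*x)) ≠ 0 := by positivity
  have h3 : (1 + Real.exp (2*y)) ≠ 0 := by positivity
  have := inv_injective h
  have := Real.exp_injective (by linarith [add_left_cancel this] : Real.exp (2*x) = Real.exp (2*y))
  linarith

lemma uu_image_univ : uu '' Set.univ = Set.Ioo 0 1 := by
  ext y
  simp only [Set.image_univ, Set.mem_range, Set.mem_Ioo]
  constructor
  · rintro ⟨x, rfl⟩; exact ⟨uu_pos x, uu_lt_one x⟩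
  · rintro ⟨h0, h1⟩
    refine ⟨Real.log (1/y - 1) / 2, ?_⟩
    unfold uu
    have hy : 0 < 1/y - 1 := by
      rw [lt_sub_iff_add_lt, zero_add, lt_div_iff₀ h0, one_mul]; exact h1
    rw [show 2 * (Real.log (1/y - 1) / 2) = Real.log (1/y - 1) by ring, Real.exp_log hy]
    field_simp
    ring

lemma poch_ne_zero {z : ℂ} (h : 0 < z.re) (j : ℕ) : poch z j ≠ 0 := by
  unfold poch
  rw [Finset.prod_ne_zero_iff]
  intro m _
  intro hm
  have := congrArg Complex.re hm
  simp [Complex.add_re] at this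
  have hm0 : (0:ℝ) ≤ (m:ℝ) := Nat.cast_nonneg m
  linarith

lemma poch_succ (z : ℂ) (j : ℕ) : poch z (j+1) = poch z j * (z + j) := Finset.prod_range_succ _ _

lemma Gamma_poch {z : ℂ} (hz : 0 < z.re) (j : ℕ) :
    Complex.Gamma (z + j) = poch z j * Complex.Gamma z := by
  induction j with
  | zero => simp [poch]
  | succ j ih =>
    have hne : z + j ≠ 0 := by
      intro h
      have := congrArg Complex.re h
      simp [Complex.add_re] at this
      have : (0:ℝ) ≤ (j:ℝ) := Nat.cast_nonneg j
      linarith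
    have : z + (j+1 : ℕ) = (z + j) + 1 := by push_cast; ring
    rw [this, Complex.Gamma_add_one _ hne, ih, poch_succ]
    ring

lemma uu_deriv_abs (x : ℝ) : |(-(2 * uu x * (1 - uu x)))| = 2 * uu x * (1 - uu x) := by
  rw [abs_neg, abs_of_pos]
  have := uu_pos x; have := one_sub_uu_pos x; nlinarith

lemma change_var (g : ℝ → ℂ) :
    ∫ u in Set.Ioo (0:ℝ) 1, g u = ∫ x : ℝ, (2 * uu x * (1 - uu x)) • g (uu x) := by
  rw [← uu_image_univ,
    integral_image_eq_integral_abs_deriv_smul MeasurableSet.univ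
      (fun x _ => (hasDerivAt_uu x).hasDerivWithinAt) uu_injective.injOn g]
  simp only [uu_deriv_abs, Measure.restrict_univ]

lemma change_var_integrable (g : ℝ → ℂ) :
    IntegrableOn g (Set.Ioo (0:ℝ) 1) volume ↔
      Integrable (fun x : ℝ => (2 * uu x * (1 - uu x)) • g (uu x)) volume := by
  rw [← uu_image_univ,
    integrableOn_image_iff_integrableOn_abs_deriv_smul MeasurableSet.univ
      (fun x _ => (hasDerivAt_uu x).hasDerivWithinAt) uu_injective.injOn g]
  simp only [uu_deriv_abs, IntegrableOn, Measure.restrict_univ]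

lemma cancel_aux {U V A B T R S C D : ℂ} (hU : U ≠ 0) (hV : V ≠ 0) (h2 : T * (R * S) = 2) :
    2 * U * V * (A * C / U * (B * D / V)) = T * (C * D * (R * A) * (S * B)) := by
  field_simp
  linear_combination (-(A*B*C*D)) * h2

lemma pointwise_eq (ξ r s x : ℝ) :
    ((2 * uu x * (1 - uu x) : ℝ) : ℂ) *
      ((uu x : ℂ) ^ ((r:ℂ) + Complex.I * ξ / 2 - 1) *
        ((1 - uu x : ℝ) : ℂ) ^ ((s:ℂ) - Complex.I * ξ / 2 - 1))
    = (2:ℂ) ^ ((1:ℂ) - r - s) *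
        (Complex.exp (-(Complex.I * ξ * x)) * (((1 - Real.tanh x) ^ r : ℝ) : ℂ) *
          (((1 + Real.tanh x) ^ s : ℝ) : ℂ)) := by
  have hu := uu_pos x
  have hu1 := one_sub_uu_pos x
  set u := uu x with hudef
  have hU : (u : ℂ) ≠ 0 := Complex.ofReal_ne_zero.mpr hu.ne'
  have hV : ((1 - u : ℝ) : ℂ) ≠ 0 := Complex.ofReal_ne_zero.mpr hu1.ne'
  -- complex exponential piece
  have hexp : (u : ℂ) ^ (Complex.I * ξ / 2) * ((1 - u : ℝ) : ℂ) ^ (-(Complex.I * ξ / 2))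
      = Complex.exp (-(Complex.I * ξ * x)) := by
    rw [Complex.cpow_def_of_ne_zero hU, Complex.cpow_def_of_ne_zero hV,
      ← Complex.exp_add, ← Complex.ofReal_log hu.le, ← Complex.ofReal_log hu1.le]
    have hlog : Real.log u - Real.log (1 - u) = -(2*x) := by
      rw [← Real.log_div hu.ne' hu1.ne', hudef, uu_div_one_sub, Real.log_exp]
    have : (Real.log u : ℂ) * (Complex.I * ξ / 2) +
        (Real.log (1-u) : ℂ) * -(Complex.I * ξ / 2)
        = ((Real.log u - Real.log (1-u) : ℝ) : ℂ) * (Complex.I * ξ / 2) := by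
      push_cast; ring
    rw [this, hlog]
    push_cast; ring_nf
  -- real power pieces
  have hr1 : (((1 - Real.tanh x) ^ r : ℝ) : ℂ) = (2:ℂ) ^ (r:ℂ) * (u:ℂ) ^ (r:ℂ) := by
    rw [one_sub_tanh, Real.mul_rpow (by norm_num) hu.le]
    push_cast [Complex.ofReal_cpow (by norm_num : (0:ℝ) ≤ 2), Complex.ofReal_cpow hu.le]
    norm_num
  have hs1 : (((1 + Real.tanh x) ^ s : ℝ) : ℂ) = (2:ℂ) ^ (s:ℂ) * ((1 - u : ℝ) : ℂ) ^ (s:ℂ) := by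
    rw [one_add_tanh, Real.mul_rpow (by norm_num) hu1.le]
    push_cast [Complex.ofReal_cpow (by norm_num : (0:ℝ) ≤ 2), Complex.ofReal_cpow hu1.le]
    norm_num
  have htwo : (2:ℂ) ^ ((1:ℂ) - r - s) * ((2:ℂ) ^ (r:ℂ) * (2:ℂ) ^ (s:ℂ)) = 2 := by
    rw [← Complex.cpow_add _ _ two_ne_zero, ← Complex.cpow_add _ _ two_ne_zero,
      show (1:ℂ) - r - s + (r + s) = 1 by ring, Complex.cpow_one]
  -- decompose the left cpow's
  have hUP : (u : ℂ) ^ ((r:ℂ) + Complex.I * ξ / 2 - 1)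
      = (u:ℂ) ^ (r:ℂ) * (u : ℂ) ^ (Complex.I * ξ / 2) / (u:ℂ) := by
    rw [← Complex.cpow_add _ _ hU, Complex.cpow_sub _ _ hU, Complex.cpow_one]
  have hVP : ((1 - u : ℝ) : ℂ) ^ ((s:ℂ) - Complex.I * ξ / 2 - 1)
      = ((1-u:ℝ):ℂ) ^ (s:ℂ) * ((1 - u : ℝ) : ℂ) ^ (-(Complex.I * ξ / 2)) / ((1-u:ℝ):ℂ) := by
    rw [← Complex.cpow_add _ _ hV, Complex.cpow_sub _ _ hV, Complex.cpow_one]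
    ring_nf
  rw [hUP, hVP, hr1, hs1, ← hexp,
    show ((2 * u * (1 - u) : ℝ) : ℂ) = 2 * (u:ℂ) * ((1-u:ℝ):ℂ) by push_cast; ring]
  exact cancel_aux hU hV htwo


lemma pointwise_smul (ξ r s x : ℝ) :
    (2 * uu x * (1 - uu x)) • (((uu x : ℝ) : ℂ) ^ ((r:ℂ) + Complex.I * ξ / 2 - 1) *
      ((1:ℂ) - ((uu x : ℝ):ℂ)) ^ ((s:ℂ) - Complex.I * ξ / 2 - 1))
    = (2:ℂ) ^ ((1:ℂ) - r - s) * (Complex.exp (-(Complex.I * ξ * x)) *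
        (((1 - Real.tanh x) ^ r : ℝ) : ℂ) * (((1 + Real.tanh x) ^ s : ℝ) : ℂ)) := by
  have h := pointwise_eq ξ r s x
  simp only [Complex.real_smul]
  push_cast at h ⊢
  linear_combination h

lemma master_integral (ξ r s : ℝ) (hr : 0 < r) (hs : 0 < s) :
    ∫ x : ℝ, Complex.exp (-(Complex.I * ξ * x)) * (((1 - Real.tanh x) ^ r : ℝ) : ℂ) *
        (((1 + Real.tanh x) ^ s : ℝ) : ℂ)
    = 2 ^ ((r:ℂ) + s - 1) *
        (Complex.Gamma ((r:ℂ) + Complex.I * ξ / 2) * Complex.Gamma ((s:ℂ) - Complex.I * ξ / 2) /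
          Complex.Gamma ((r:ℂ) + s)) := by
  set p : ℂ := (r:ℂ) + Complex.I * ξ / 2 with hp
  set q : ℂ := (s:ℂ) - Complex.I * ξ / 2 with hq
  have hpre : 0 < p.re := by simp [hp, Complex.add_re, Complex.div_re]; simpa using hr
  have hqre : 0 < q.re := by simp [hq, Complex.sub_re, Complex.div_re]; simpa using hs
  have hbeta : Complex.betaIntegral p q
      = (2:ℂ) ^ ((1:ℂ) - r - s) * ∫ x : ℝ, Complex.exp (-(Complex.I * ξ * x)) *
          (((1 - Real.tanh x) ^ r : ℝ) : ℂ) * (((1 + Real.tanh x) ^ s : ℝ) : ℂ) := by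
    rw [Complex.betaIntegral, intervalIntegral.integral_of_le (by norm_num : (0:ℝ) ≤ 1),
      integral_Ioc_eq_integral_Ioo,
      change_var (fun u : ℝ => (u:ℂ) ^ (p - 1) * ((1:ℂ) - u) ^ (q - 1))]
    rw [← MeasureTheory.integral_const_mul]
    congr 1
    funext x
    rw [hp, hq]
    exact pointwise_smul ξ r s x
  have hgamma : Complex.Gamma p * Complex.Gamma q = Complex.Gamma (p + q) * Complex.betaIntegral p q :=
    Complex.Gamma_mul_Gamma_eq_betaIntegral hpre hqre
  have hpq : p + q = ((r:ℂ) + s) := by rw [hp, hq]; ring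
  have hGne : Complex.Gamma ((r:ℂ) + s) ≠ 0 := by
    apply Complex.Gamma_ne_zero
    intro m h
    have := congrArg Complex.re h
    simp at this
    have : (r + s : ℝ) = -(m:ℝ) := by exact_mod_cast this
    have hm : (0:ℝ) ≤ m := Nat.cast_nonneg m
    linarith
  have hbeta' : Complex.Gamma p * Complex.Gamma q / Complex.Gamma ((r:ℂ) + s)
      = Complex.betaIntegral p q := by
    rw [← hpq] at hGne ⊢
    rw [hgamma]
    field_simp
  rw [hbeta'] at *
  rw [hbeta, ← mul_assoc,
    ← Complex.cpow_add _ _ two_ne_zero,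
    show (r:ℂ) + s - 1 + (1 - r - s) = 0 by ring, Complex.cpow_zero, one_mul]

lemma master_integrable (ξ r s : ℝ) (hr : 0 < r) (hs : 0 < s) :
    Integrable (fun x : ℝ => Complex.exp (-(Complex.I * ξ * x)) *
      (((1 - Real.tanh x) ^ r : ℝ) : ℂ) * (((1 + Real.tanh x) ^ s : ℝ) : ℂ)) volume := by
  set p : ℂ := (r:ℂ) + Complex.I * ξ / 2 with hp
  set q : ℂ := (s:ℂ) - Complex.I * ξ / 2 with hq
  have hpre : 0 < p.re := by simp [hp, Complex.add_re, Complex.div_re]; simpa using hr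
  have hqre : 0 < q.re := by simp [hq, Complex.sub_re, Complex.div_re]; simpa using hs
  have h1 : IntegrableOn (fun u : ℝ => (u:ℂ) ^ (p-1) * ((1:ℂ) - u) ^ (q-1)) (Ioo (0:ℝ) 1) volume := by
    have h0 := Complex.betaIntegral_convergent hpre hqre
    exact ((intervalIntegrable_iff_integrableOn_Ioc_of_le (by norm_num : (0:ℝ) ≤ 1)).mp h0).mono_set
      Set.Ioo_subset_Ioc_self
  have h2 := (change_var_integrable _).mp h1
  have heq : (fun x : ℝ => Complex.exp (-(Complex.I * ξ * x)) *
      (((1 - Real.tanh x) ^ r : ℝ) : ℂ) * (((1 + Real.tanh x) ^ s : ℝ) : ℂ))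
      = fun x : ℝ => (2:ℂ) ^ ((r:ℂ) + s - 1) *
          ((2 * uu x * (1 - uu x)) •
            ((fun u : ℝ => (u:ℂ) ^ (p-1) * ((1:ℂ) - u) ^ (q-1)) (uu x))) := by
    funext x
    simp only [hp, hq]
    rw [pointwise_smul, ← mul_assoc, ← Complex.cpow_add _ _ two_ne_zero,
      show (r:ℂ) + s - 1 + (1 - r - s) = 0 by ring, Complex.cpow_zero, one_mul]
  rw [heq]
  exact h2.const_mul _

lemma Gamma_ne_zero_of_re_pos {z : ℂ} (h : 0 < z.re) : Complex.Gamma z ≠ 0 := by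
  apply Complex.Gamma_ne_zero
  intro m hm
  rw [hm] at h
  simp at h
  have : (0:ℝ) ≤ (m:ℝ) := Nat.cast_nonneg m
  linarith

lemma re_aux (a ξ : ℝ) : ((a:ℂ) + Complex.I * ξ / 2).re = a := by
  simp [Complex.add_re, Complex.div_re, Complex.mul_re]

lemma re_aux' (a ξ : ℝ) : ((a:ℂ) - Complex.I * ξ / 2).re = a := by
  simp [Complex.sub_re, Complex.div_re, Complex.mul_re]

lemma tanh_lt_one' (x : ℝ) : 0 < 1 - Real.tanh x := by
  rw [one_sub_tanh]; have := uu_pos x; linarith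

lemma neg_one_lt_tanh' (x : ℝ) : 0 < 1 + Real.tanh x := by
  rw [one_add_tanh]; have := one_sub_uu_pos x; linarith

lemma Ix (a μ ξ : ℝ) (ha : 0 < a) (hμ : -(1:ℝ)/2 < μ) (k : ℕ) :
    ∫ x : ℝ, Complex.exp (-(Complex.I * ξ * x)) * (((1 - Real.tanh x ^ 2) ^ a : ℝ) : ℂ) *
        geg k (μ:ℂ) ((Real.tanh x : ℝ) : ℂ)
    = 2 ^ (2*(a:ℂ) - 1) * betaC ((a:ℂ) + Complex.I * ξ / 2) ((a:ℂ) - Complex.I * ξ / 2) *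
        (poch (2*(μ:ℂ)) k / (k.factorial : ℂ)) *
        F32 k ((k:ℂ) + 2*(μ:ℂ)) ((a:ℂ) + Complex.I * ξ / 2) ((μ:ℂ) + 1/2) (2*(a:ℂ)) := by
  have hpt : ∀ x : ℝ, Complex.exp (-(Complex.I * ξ * x)) * (((1 - Real.tanh x ^ 2) ^ a : ℝ) : ℂ) *
      geg k (μ:ℂ) ((Real.tanh x : ℝ) : ℂ)
      = ∑ j ∈ Finset.range (k+1),
          (poch (2*(μ:ℂ)) k / (k.factorial : ℂ) *
            (poch (-(k:ℂ)) j * poch ((k:ℂ) + 2*(μ:ℂ)) j /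
              (poch ((μ:ℂ) + 1/2) j * (j.factorial : ℂ))) * ((2:ℂ)⁻¹)^j) *
          (Complex.exp (-(Complex.I * ξ * x)) * (((1 - Real.tanh x) ^ (a + j) : ℝ) : ℂ) *
            (((1 + Real.tanh x) ^ a : ℝ) : ℂ)) := by
    intro x
    have h1 := tanh_lt_one' x
    have h2 := neg_one_lt_tanh' x
    rw [geg, F21, Finset.mul_sum, Finset.mul_sum]
    refine Finset.sum_congr rfl fun j hj => ?_
    have hre : (1 - Real.tanh x ^ 2 : ℝ) ^ a * ((1 - Real.tanh x)/2)^j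
        = ((2:ℝ)⁻¹)^j * ((1 - Real.tanh x) ^ (a + (j:ℝ)) * (1 + Real.tanh x) ^ a) := by
      rw [show (1 - Real.tanh x ^ 2 : ℝ) = (1 - Real.tanh x) * (1 + Real.tanh x) by ring,
        Real.mul_rpow h1.le h2.le, Real.rpow_add h1, Real.rpow_natCast, div_pow]
      ring_nf
      simp only [one_div]
    have hC := congrArg (Complex.ofReal) hre
    push_cast at hC
    rw [show ((1:ℂ) - ((Real.tanh x : ℝ):ℂ)) / 2 = (((1 - Real.tanh x)/2 : ℝ) : ℂ) by push_cast; ring]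
    push_cast
    linear_combination (Complex.exp (-(Complex.I * ξ * x)) * (poch (2*(μ:ℂ)) k / (k.factorial : ℂ)) *
      (poch (-(k:ℂ)) j * poch ((k:ℂ) + 2*(μ:ℂ)) j /
        (poch ((μ:ℂ) + 1/2) j * (j.factorial : ℂ)))) * hC
  simp only [hpt]
  have hswap := MeasureTheory.integral_finset_sum (μ := volume) (Finset.range (k+1))
    (f := fun j (x : ℝ) =>
      (poch (2*(μ:ℂ)) k / (k.factorial : ℂ) *
        (poch (-(k:ℂ)) j * poch ((k:ℂ) + 2*(μ:ℂ)) j /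
          (poch ((μ:ℂ) + 1/2) j * (j.factorial : ℂ))) * ((2:ℂ)⁻¹)^j) *
      (Complex.exp (-(Complex.I * ξ * x)) * (((1 - Real.tanh x) ^ (a + j) : ℝ) : ℂ) *
        (((1 + Real.tanh x) ^ a : ℝ) : ℂ)))
    (fun j hj => (master_integrable ξ (a + j) a (by positivity) ha).const_mul _)
  rw [hswap]
  simp only [MeasureTheory.integral_const_mul]
  rw [F32, Finset.mul_sum]
  refine Finset.sum_congr rfl fun j hj => ?_
  rw [master_integral ξ (a + j) a (by positivity) ha]
  have e1 : ((a + (j:ℝ) : ℝ) : ℂ) = (a:ℂ) + j := by push_cast; ring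
  rw [e1]
  rw [show (a:ℂ) + (j:ℂ) + Complex.I * ξ / 2 = ((a:ℂ) + Complex.I * ξ / 2) + (j:ℕ) by push_cast; ring,
    Gamma_poch (by rw [re_aux]; exact ha) j,
    show (a:ℂ) + (j:ℂ) + (a:ℂ) = (2*(a:ℂ)) + (j:ℕ) by push_cast; ring,
    Gamma_poch (by simpa using (by linarith : (0:ℝ) < 2*a)) j,
    show 2*(a:ℂ) + (j:ℂ) - 1 = (2*(a:ℂ) - 1) + ((j:ℕ):ℂ) by push_cast; ring,
    Complex.cpow_add _ _ two_ne_zero, Complex.cpow_natCast,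
    betaC, show ((a:ℂ) + Complex.I * ξ / 2) + ((a:ℂ) - Complex.I * ξ / 2) = 2*(a:ℂ) by ring]
  have hD := poch_ne_zero (show (0:ℝ) < ((μ:ℂ)+1/2).re by simp; linarith) j
  have hP2 := poch_ne_zero (show (0:ℝ) < (2*(a:ℂ)).re by simp; linarith) j
  have hG3 := Gamma_ne_zero_of_re_pos (show (0:ℝ) < (2*(a:ℂ)).re by simp; linarith)
  have hjf : ((j.factorial : ℂ)) ≠ 0 := Nat.cast_ne_zero.mpr j.factorial_ne_zero
  have hkf : ((k.factorial : ℂ)) ≠ 0 := Nat.cast_ne_zero.mpr k.factorial_ne_zero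
  have h2jne : ((2:ℂ))^j ≠ 0 := pow_ne_zero _ two_ne_zero
  field_simp
  rw [one_div, inv_pow, inv_mul_cancel_right₀ h2jne]

lemma It (bk c : ℝ) (hbk : 0 < bk) (hc : 0 < c) (m : ℕ) (A B : ℂ) (hA : 0 < (A+1).re) (ξ : ℝ) :
    ∫ t : ℝ, Complex.exp (-(Complex.I * ξ * t)) * (((1 + Real.tanh t) ^ bk : ℝ) : ℂ) *
        (((1 - Real.tanh t) ^ c : ℝ) : ℂ) * jac m A B ((-Real.tanh t : ℝ) : ℂ)
    = 2 ^ ((bk:ℂ) + c - 1) *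
        (Complex.Gamma ((bk:ℂ) - Complex.I * ξ / 2) * Complex.Gamma ((c:ℂ) + Complex.I * ξ / 2) /
          Complex.Gamma ((bk:ℂ) + c)) *
        (poch (A + 1) m / (m.factorial : ℂ)) *
        F32 m ((m:ℂ) + A + B + 1) ((bk:ℂ) - Complex.I * ξ / 2) (A + 1) ((bk:ℂ) + c) := by
  have hpt : ∀ t : ℝ, Complex.exp (-(Complex.I * ξ * t)) * (((1 + Real.tanh t) ^ bk : ℝ) : ℂ) *
      (((1 - Real.tanh t) ^ c : ℝ) : ℂ) * jac m A B ((-Real.tanh t : ℝ) : ℂ)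
      = ∑ j ∈ Finset.range (m+1),
          (poch (A + 1) m / (m.factorial : ℂ) *
            (poch (-(m:ℂ)) j * poch ((m:ℂ) + A + B + 1) j /
              (poch (A + 1) j * (j.factorial : ℂ))) * ((2:ℂ)⁻¹)^j) *
          (Complex.exp (-(Complex.I * ξ * t)) * (((1 - Real.tanh t) ^ c : ℝ) : ℂ) *
            (((1 + Real.tanh t) ^ (bk + j) : ℝ) : ℂ)) := by
    intro t
    have h1 := tanh_lt_one' t
    have h2 := neg_one_lt_tanh' t
    rw [jac, F21, Finset.mul_sum, Finset.mul_sum]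
    refine Finset.sum_congr rfl fun j hj => ?_
    have hre : (1 + Real.tanh t) ^ bk * ((1 + Real.tanh t)/2)^j
        = ((2:ℝ)⁻¹)^j * (1 + Real.tanh t) ^ (bk + (j:ℝ)) := by
      rw [Real.rpow_add h2, Real.rpow_natCast, div_pow]
      ring_nf
      simp only [one_div]
    have hC := congrArg (Complex.ofReal) hre
    push_cast at hC
    rw [show ((1:ℂ) - ((-Real.tanh t : ℝ):ℂ)) / 2 = (((1 + Real.tanh t)/2 : ℝ) : ℂ) by
      push_cast; ring]
    push_cast
    linear_combination (Complex.exp (-(Complex.I * ξ * t)) * (((1 - Real.tanh t) ^ c : ℝ) : ℂ) *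
      (poch (A + 1) m / (m.factorial : ℂ)) *
      (poch (-(m:ℂ)) j * poch ((m:ℂ) + A + B + 1) j /
        (poch (A + 1) j * (j.factorial : ℂ)))) * hC
  simp only [hpt]
  have hswap := MeasureTheory.integral_finset_sum (μ := volume) (Finset.range (m+1))
    (f := fun j (t : ℝ) =>
      (poch (A + 1) m / (m.factorial : ℂ) *
        (poch (-(m:ℂ)) j * poch ((m:ℂ) + A + B + 1) j /
          (poch (A + 1) j * (j.factorial : ℂ))) * ((2:ℂ)⁻¹)^j) *
      (Complex.exp (-(Complex.I * ξ * t)) * (((1 - Real.tanh t) ^ c : ℝ) : ℂ) *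
        (((1 + Real.tanh t) ^ (bk + j) : ℝ) : ℂ)))
    (fun j hj => (master_integrable ξ c (bk + j) hc (by positivity)).const_mul _)
  rw [hswap]
  simp only [MeasureTheory.integral_const_mul]
  rw [F32, Finset.mul_sum]
  refine Finset.sum_congr rfl fun j hj => ?_
  rw [master_integral ξ c (bk + j) hc (by positivity)]
  have e1 : ((bk + (j:ℝ) : ℝ) : ℂ) = (bk:ℂ) + j := by push_cast; ring
  rw [e1]
  rw [show (bk:ℂ) + (j:ℂ) - Complex.I * ξ / 2 = ((bk:ℂ) - Complex.I * ξ / 2) + (j:ℕ) by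
        push_cast; ring,
    Gamma_poch (by rw [re_aux']; exact hbk) j,
    show (c:ℂ) + ((bk:ℂ) + (j:ℂ)) = ((bk:ℂ) + c) + (j:ℕ) by push_cast; ring,
    Gamma_poch (by simpa using (by linarith : (0:ℝ) < bk + c)) j]
  rw [show (bk:ℂ) + c + (j:ℂ) - 1 = (((bk:ℂ) + c) - 1) + ((j:ℕ):ℂ) by push_cast; ring,
    Complex.cpow_add _ _ two_ne_zero, Complex.cpow_natCast]
  have hD := poch_ne_zero hA j
  have hP2 := poch_ne_zero (show (0:ℝ) < ((bk:ℂ)+c).re by simp; linarith) j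
  have hG3 := Gamma_ne_zero_of_re_pos (show (0:ℝ) < ((bk:ℂ)+c).re by simp; linarith)
  have hjf : ((j.factorial : ℂ)) ≠ 0 := Nat.cast_ne_zero.mpr j.factorial_ne_zero
  have hmf : ((m.factorial : ℂ)) ≠ 0 := Nat.cast_ne_zero.mpr m.factorial_ne_zero
  have h2jne : ((2:ℂ))^j ≠ 0 := pow_ne_zero _ two_ne_zero
  field_simp
  rw [one_div, inv_pow, inv_mul_cancel_right₀ h2jne]

/-- two-variable Fourier transform of Jacobi polynomials on the cone
(`d = 1` case). -/
theorem fourier_jacobi_cone (a b c μ β γ : ℝ) (ha : 0 < a) (hb : 0 < b) (hc : 0 < c)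
    (hμ : -1/2 < μ) (hβ : 0 < 2 * μ + β + 1) (hγ : -1 < γ)
    (n k : ℕ) (hk : k ≤ n) (ξ₁ ξ₂ : ℝ) :
    ∫ t : ℝ, ∫ x : ℝ,
        Complex.exp (-(Complex.I * ξ₁ * x) - Complex.I * ξ₂ * t) *
        (((1 - Real.tanh x ^ 2) ^ a : ℝ) : ℂ) *
        (((1 + Real.tanh t) ^ (b + k) : ℝ) : ℂ) *
        (((1 - Real.tanh t) ^ c : ℝ) : ℂ) * (2 : ℂ) ^ (-(k : ℤ)) *
        jac (n - k) ((2 * k + 2 * μ + β : ℝ) : ℂ) (γ : ℂ) ((-Real.tanh t : ℝ) : ℂ) *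
        geg k (μ : ℂ) ((Real.tanh x : ℝ) : ℂ)
      = 2 ^ ((b : ℂ) + c + 2 * a - 2) *
          (poch (2 * (k : ℂ) + 2 * μ + β + 1) (n - k) * poch (2 * (μ : ℂ)) k /
            (((n - k).factorial : ℂ) * (k.factorial : ℂ))) *
          (Complex.Gamma ((b : ℂ) + k - Complex.I * ξ₂ / 2) *
            Complex.Gamma ((c : ℂ) + Complex.I * ξ₂ / 2) /
            Complex.Gamma ((k : ℂ) + b + c)) *
          betaC ((a : ℂ) + Complex.I * ξ₁ / 2) ((a : ℂ) - Complex.I * ξ₁ / 2) *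
          F32 k ((k : ℂ) + 2 * μ) ((a : ℂ) + Complex.I * ξ₁ / 2) ((μ : ℂ) + 1/2)
            (2 * (a : ℂ)) *
          F32 (n - k) ((n : ℂ) + k + 2 * μ + β + γ + 1)
            ((k : ℂ) + b - Complex.I * ξ₂ / 2)
            (2 * (k : ℂ) + 2 * μ + β + 1) ((k : ℂ) + b + c) := by
  have hbk : (0:ℝ) < b + k := by positivity
  have hA : (0:ℝ) < (((2 * k + 2 * μ + β : ℝ) : ℂ) + 1).re := by
    simp only [Complex.add_re, Complex.ofReal_re, Complex.one_re]
    have : (0:ℝ) ≤ (k:ℝ) := Nat.cast_nonneg k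
    linarith
  have hinner : (fun t : ℝ => ∫ x : ℝ,
        Complex.exp (-(Complex.I * ξ₁ * x) - Complex.I * ξ₂ * t) *
        (((1 - Real.tanh x ^ 2) ^ a : ℝ) : ℂ) *
        (((1 + Real.tanh t) ^ (b + k) : ℝ) : ℂ) *
        (((1 - Real.tanh t) ^ c : ℝ) : ℂ) * (2 : ℂ) ^ (-(k : ℤ)) *
        jac (n - k) ((2 * k + 2 * μ + β : ℝ) : ℂ) (γ : ℂ) ((-Real.tanh t : ℝ) : ℂ) *
        geg k (μ : ℂ) ((Real.tanh x : ℝ) : ℂ))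
      = fun t : ℝ =>
        ((2:ℂ) ^ (2*(a:ℂ) - 1) * betaC ((a:ℂ) + Complex.I * ξ₁ / 2) ((a:ℂ) - Complex.I * ξ₁ / 2) *
          (poch (2*(μ:ℂ)) k / (k.factorial : ℂ)) *
          F32 k ((k:ℂ) + 2*(μ:ℂ)) ((a:ℂ) + Complex.I * ξ₁ / 2) ((μ:ℂ) + 1/2) (2*(a:ℂ)) *
          (2 : ℂ) ^ (-(k : ℤ))) *
        (Complex.exp (-(Complex.I * ξ₂ * t)) * (((1 + Real.tanh t) ^ (b + k) : ℝ) : ℂ) *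
          (((1 - Real.tanh t) ^ c : ℝ) : ℂ) *
          jac (n - k) ((2 * k + 2 * μ + β : ℝ) : ℂ) (γ : ℂ) ((-Real.tanh t : ℝ) : ℂ)) := by
    funext t
    rw [show (fun x : ℝ =>
        Complex.exp (-(Complex.I * ξ₁ * x) - Complex.I * ξ₂ * t) *
        (((1 - Real.tanh x ^ 2) ^ a : ℝ) : ℂ) *
        (((1 + Real.tanh t) ^ (b + k) : ℝ) : ℂ) *
        (((1 - Real.tanh t) ^ c : ℝ) : ℂ) * (2 : ℂ) ^ (-(k : ℤ)) *
        jac (n - k) ((2 * k + 2 * μ + β : ℝ) : ℂ) (γ : ℂ) ((-Real.tanh t : ℝ) : ℂ) *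
        geg k (μ : ℂ) ((Real.tanh x : ℝ) : ℂ))
      = fun x : ℝ =>
        (Complex.exp (-(Complex.I * ξ₂ * t)) * (((1 + Real.tanh t) ^ (b + k) : ℝ) : ℂ) *
          (((1 - Real.tanh t) ^ c : ℝ) : ℂ) *
          jac (n - k) ((2 * k + 2 * μ + β : ℝ) : ℂ) (γ : ℂ) ((-Real.tanh t : ℝ) : ℂ) *
          (2 : ℂ) ^ (-(k : ℤ))) *
        (Complex.exp (-(Complex.I * ξ₁ * x)) * (((1 - Real.tanh x ^ 2) ^ a : ℝ) : ℂ) *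
          geg k (μ : ℂ) ((Real.tanh x : ℝ) : ℂ))
      from funext fun x => by
        rw [show Complex.exp (-(Complex.I * ξ₁ * x) - Complex.I * ξ₂ * t)
            = Complex.exp (-(Complex.I * ξ₂ * t)) * Complex.exp (-(Complex.I * ξ₁ * x)) by
          rw [← Complex.exp_add]; congr 1; ring]
        ring]
    rw [MeasureTheory.integral_const_mul, Ix a μ ξ₁ ha (by linarith) k]
    ring
  rw [hinner, MeasureTheory.integral_const_mul,
    It (b + k) c hbk hc (n - k) ((2 * k + 2 * μ + β : ℝ) : ℂ) (γ : ℂ) hA ξ₂]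
  have e1 : ((b + (k:ℝ) : ℝ) : ℂ) = (b:ℂ) + (k:ℂ) := by push_cast; ring
  have e2 : ((2 * (k:ℝ) + 2 * μ + β : ℝ) : ℂ) = 2*(k:ℂ) + 2*(μ:ℂ) + (β:ℂ) := by push_cast; ring
  have e3 : ((n - k : ℕ) : ℂ) = (n:ℂ) - (k:ℂ) := by
    push_cast [Nat.cast_sub hk]; ring
  rw [e1, e2, e3]
  rw [show (n:ℂ) - (k:ℂ) + (2*(k:ℂ) + 2*(μ:ℂ) + (β:ℂ)) + (γ:ℂ) + 1
      = (n:ℂ) + (k:ℂ) + 2*(μ:ℂ) + (β:ℂ) + (γ:ℂ) + 1 by ring,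
    show (b:ℂ) + (k:ℂ) - Complex.I * ξ₂ / 2 = (k:ℂ) + (b:ℂ) - Complex.I * ξ₂ / 2 by ring,
    show (b:ℂ) + (k:ℂ) + (c:ℂ) = (k:ℂ) + (b:ℂ) + (c:ℂ) by ring]
  have hpow : (2:ℂ) ^ (2*(a:ℂ) - 1) * (2:ℂ) ^ (-(k:ℤ)) * (2:ℂ) ^ ((k:ℂ) + (b:ℂ) + (c:ℂ) - 1)
      = (2:ℂ) ^ ((b:ℂ) + c + 2*a - 2) := by
    rw [show ((2:ℂ) ^ (-(k:ℤ))) = (2:ℂ) ^ (((-(k:ℤ)) : ℤ) : ℂ) from (Complex.cpow_intCast 2 _).symm,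
      ← Complex.cpow_add _ _ two_ne_zero, ← Complex.cpow_add _ _ two_ne_zero]
    congr 1
    push_cast
    ring
  linear_combination (betaC ((a:ℂ) + Complex.I * ξ₁ / 2) ((a:ℂ) - Complex.I * ξ₁ / 2) *
    (poch (2*(μ:ℂ)) k / (k.factorial : ℂ)) *
    F32 k ((k:ℂ) + 2*(μ:ℂ)) ((a:ℂ) + Complex.I * ξ₁ / 2) ((μ:ℂ) + 1/2) (2*(a:ℂ)) *
    (Complex.Gamma ((k:ℂ) + (b:ℂ) - Complex.I * ξ₂ / 2) *
      Complex.Gamma ((c:ℂ) + Complex.I * ξ₂ / 2) / Complex.Gamma ((k:ℂ) + (b:ℂ) + (c:ℂ))) *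
    (poch (2*(k:ℂ) + 2*(μ:ℂ) + (β:ℂ) + 1) (n - k) / ((n - k).factorial : ℂ)) *
    F32 (n - k) ((n:ℂ) + (k:ℂ) + 2*(μ:ℂ) + (β:ℂ) + (γ:ℂ) + 1)
      ((k:ℂ) + (b:ℂ) - Complex.I * ξ₂ / 2) (2*(k:ℂ) + 2*(μ:ℂ) + (β:ℂ) + 1)
      ((k:ℂ) + (b:ℂ) + (c:ℂ))) * hpow
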